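/- Let Q be a finite connected graded quiver with grading period r ≥ 1, fixed vertex i, and let w be a closed walk of Q at i of virtual degree r. Then the map [u] ↦ [uw] on walk-classes extends to a quiver-automorphism s of the covering quiver Q̃, which under the identification Q̃ ≅ P^0 equals the restriction of σ^r to P^0. -/

import Mathlib

/-- A graded quiver: a quiver with each arrow assigned an integer degree. -/
structure GradedQuiver where
  V : Type
  Arr : V → V → Type
  deg : ∀ {a b : V}, Arr a b → ℤ

namespace GradedQuiver

variable (Q : GradedQuiver)

/-- Paths: composable sequences of arrows (including trivial paths). -/
inductive Path : Q.V → Q.V → Type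
  | nil (a : Q.V) : Path a a
  | cons {a b c : Q.V} (p : Path a b) (e : Q.Arr b c) : Path a c

/-- The length of a path. -/
def Path.length {Q : GradedQuiver} : ∀ {a b : Q.V}, Q.Path a b → ℕ
  | _, _, .nil _ => 0
  | _, _, .cons p _ => p.length + 1

/-- The virtual degree of a path: the sum of `d(α) = 1 - |α|` over its arrows. -/
def Path.vdeg {Q : GradedQuiver} : ∀ {a b : Q.V}, Q.Path a b → ℤ
  | _, _, .nil _ => 0
  | _, _, .cons p e => p.vdeg + (1 - Q.deg e)

/-- The degree of a path: the sum of the degrees of its arrows. -/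
def Path.degree {Q : GradedQuiver} : ∀ {a b : Q.V}, Q.Path a b → ℤ
  | _, _, .nil _ => 0
  | _, _, .cons p e => p.degree + Q.deg e

/-- Walks: formal composites of arrows and formal inverses of arrows with
matching endpoints. -/
inductive Walk : Q.V → Q.V → Type
  | nil (a : Q.V) : Walk a a
  | consArr {a b c : Q.V} (w : Walk a b) (e : Q.Arr b c) : Walk a c
  | consInv {a b c : Q.V} (w : Walk a b) (e : Q.Arr c b) : Walk a c

/-- The virtual degree of a walk: `d(α) = 1 - |α|` for each arrow letter,
`-(1 - |α|)` for each inverse-arrow letter. -/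
def Walk.vdeg {Q : GradedQuiver} : ∀ {a b : Q.V}, Q.Walk a b → ℤ
  | _, _, .nil _ => 0
  | _, _, .consArr w e => w.vdeg + (1 - Q.deg e)
  | _, _, .consInv w e => w.vdeg - (1 - Q.deg e)

/-- `r` is the grading period of `Q`: it is `0` if every closed walk has virtual
degree `0`, and otherwise the minimal positive integer occurring as the virtual
degree of some closed walk. -/
def IsGradingPeriod (r : ℕ) : Prop :=
  (r = 0 ∧ ∀ (a : Q.V) (w : Q.Walk a a), w.vdeg = 0) ∨
  (0 < r ∧ (∃ (a : Q.V) (w : Q.Walk a a), w.vdeg = (r : ℤ)) ∧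
    ∀ (a : Q.V) (w : Q.Walk a a), 0 < w.vdeg → (r : ℤ) ≤ w.vdeg)

/-- `Q` is connected: any two vertices are joined by a walk. -/
def Connected : Prop := ∀ a b : Q.V, Nonempty (Q.Walk a b)

/-- The ℤ-covering quiver `P` of `Q`: vertices are pairs `(i, j)`, `i ∈ Q₀`,
`j ∈ ℤ`, and arrows `(α, j) : (s α, j) → (t α, j + d α)` with `d α = 1 - |α|`.
It is regarded as a graded quiver concentrated in degree `0`. -/
def Cover : GradedQuiver where
  V := Q.V × ℤ
  Arr := fun x y => { e : Q.Arr x.1 y.1 // y.2 = x.2 + (1 - Q.deg e) }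
  deg := fun _ => 0

end GradedQuiver

namespace GradedQuiver

/-- The covering quiver `Q̃` of `Q` at the vertex `i`: its vertices are the
equivalence classes of walks of `Q` with source `i`, where two walks are equivalent
iff they have the same target and the same virtual degree. A class is completely
determined by (and identified with) the pair (target, virtual degree). Its arrows
`α^[u] : [u] → [αu]` are given by the arrows `α` of `Q` with `s(α) = t(u)`. It is
regarded as a graded quiver concentrated in degree `0`. -/
def Tilde (Q : GradedQuiver) (i : Q.V) : GradedQuiver where
  V := { x : Q.V × ℤ // ∃ u : Q.Walk i x.1, u.vdeg = x.2 }
  Arr := fun c c' => { a : Q.Arr c.val.1 c'.val.1 // c'.val.2 = c.val.2 + (1 - Q.deg a) }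
  deg := fun _ => 0

end GradedQuiver

namespace GradedQuiver

variable {Q : GradedQuiver}

def Walk.append : ∀ {a b c : Q.V}, Q.Walk a b → Q.Walk b c → Q.Walk a c
  | _, _, _, u, .nil _ => u
  | _, _, _, u, .consArr v e => .consArr (u.append v) e
  | _, _, _, u, .consInv v e => .consInv (u.append v) e

theorem Walk.vdeg_append : ∀ {a b c : Q.V} (u : Q.Walk a b) (v : Q.Walk b c),
    (u.append v).vdeg = u.vdeg + v.vdeg
  | _, _, _, _, .nil _ => by simp only [Walk.append, Walk.vdeg, add_zero]
  | _, _, _, u, .consArr v e => by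
      simp only [Walk.append, Walk.vdeg, Walk.vdeg_append u v]; ring
  | _, _, _, u, .consInv v e => by
      simp only [Walk.append, Walk.vdeg, Walk.vdeg_append u v]; ring

def Walk.reverse : ∀ {a b : Q.V}, Q.Walk a b → Q.Walk b a
  | _, _, .nil a => .nil a
  | _, _, .consArr w e => (Walk.consInv (.nil _) e).append w.reverse
  | _, _, .consInv w e => (Walk.consArr (.nil _) e).append w.reverse

theorem Walk.vdeg_reverse : ∀ {a b : Q.V} (u : Q.Walk a b), u.reverse.vdeg = -u.vdeg
  | _, _, .nil a => by simp only [Walk.reverse, Walk.vdeg, neg_zero]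
  | _, _, .consArr w e => by
      simp only [Walk.reverse, Walk.vdeg, Walk.vdeg_append, Walk.vdeg_reverse w]; ring
  | _, _, .consInv w e => by
      simp only [Walk.reverse, Walk.vdeg, Walk.vdeg_append, Walk.vdeg_reverse w]; ring

theorem Walk.exists_vdeg_eq_iff_exists_vdeg_eq_add {i x : Q.V} (w : Q.Walk i i) (d : ℤ) :
    (∃ u : Q.Walk i x, u.vdeg = d) ↔ ∃ u : Q.Walk i x, u.vdeg = d + w.vdeg := by
  constructor
  · rintro ⟨u, rfl⟩
    exact ⟨w.append u, by rw [Walk.vdeg_append, add_comm]⟩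
  · rintro ⟨u, hu⟩
    exact ⟨w.reverse.append u, by rw [Walk.vdeg_append, Walk.vdeg_reverse, hu]; ring⟩

namespace Tilde

variable {i : Q.V}

/-- The vertex map `[u] ↦ [uw]` of `Q̃`, for a closed walk `w` at `i`. -/
def shift (w : Q.Walk i i) : (Q.Tilde i).V ≃ (Q.Tilde i).V :=
  ((Equiv.refl Q.V).prodCongr (Equiv.addRight w.vdeg)).subtypeEquiv fun c =>
    Walk.exists_vdeg_eq_iff_exists_vdeg_eq_add w c.2

theorem shift_val (w : Q.Walk i i) (c : (Q.Tilde i).V) :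
    (shift w c).val = (c.val.1, c.val.2 + w.vdeg) :=
  rfl

def shiftArr (w : Q.Walk i i) (c c' : (Q.Tilde i).V) :
    (Q.Tilde i).Arr c c' ≃ (Q.Tilde i).Arr (shift w c) (shift w c') :=
  (Equiv.refl _).subtypeEquiv fun a => by
    change _ ↔ c'.val.2 + w.vdeg = c.val.2 + w.vdeg + (1 - Q.deg a)
    omega

theorem shiftArr_val (w : Q.Walk i i) {c c' : (Q.Tilde i).V} (a : (Q.Tilde i).Arr c c') :
    (shiftArr w c c' a).val = a.val :=
  rfl

end Tilde

end GradedQuiver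

theorem stmt_15_general (Q : GradedQuiver) (r : ℕ)
    (i : Q.V) (w : Q.Walk i i) (hw : w.vdeg = (r : ℤ)) :
    ∃ sV : (Q.Tilde i).V ≃ (Q.Tilde i).V,
      (∀ c : (Q.Tilde i).V, (sV c).val = (c.val.1, c.val.2 + (r : ℤ))) ∧
      ∀ c c' : (Q.Tilde i).V,
        ∃ sA : (Q.Tilde i).Arr c c' ≃ (Q.Tilde i).Arr (sV c) (sV c'),
          ∀ a : (Q.Tilde i).Arr c c', HEq (sA a).val a.val :=
  ⟨GradedQuiver.Tilde.shift w, fun c => by rw [GradedQuiver.Tilde.shift_val, hw],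
    fun c c' =>
      ⟨GradedQuiver.Tilde.shiftArr w c c', fun a =>
        heq_of_eq (GradedQuiver.Tilde.shiftArr_val w a)⟩⟩

/-- let `Q` be a finite connected graded quiver with grading period
`r ≥ 1`, fixed vertex `i`, and let `w` be a closed walk of `Q` at `i` of virtual
degree `r`. Then `[u] ↦ [uw]` extends to a quiver-automorphism `s` of `Q̃`, which
under the identification `Q̃ ≅ P^0` (`[u] ↦ (t(u), d(u))`) equals the restriction of
`σ^r` to `P^0`: on vertices it is `(i', d) ↦ (i', d + r)` and it fixes the
underlying arrows of `Q`. -/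
theorem stmt_15 (Q : GradedQuiver) (hV : Finite Q.V) (hA : ∀ a b : Q.V, Finite (Q.Arr a b))
    (hconn : Q.Connected) (r : ℕ) (hr : 1 ≤ r) (hper : Q.IsGradingPeriod r)
    (i : Q.V) (w : Q.Walk i i) (hw : w.vdeg = (r : ℤ)) :
    ∃ sV : (Q.Tilde i).V ≃ (Q.Tilde i).V,
      (∀ c : (Q.Tilde i).V, (sV c).val = (c.val.1, c.val.2 + (r : ℤ))) ∧
      ∀ c c' : (Q.Tilde i).V,
        ∃ sA : (Q.Tilde i).Arr c c' ≃ (Q.Tilde i).Arr (sV c) (sV c'),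
          ∀ a : (Q.Tilde i).Arr c c', HEq (sA a).val a.val :=
  stmt_15_general Q r i w hw
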